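/- arXiv:2502.08873 — 4 statements merged into one kernel-verified Lean document; each statement's English description precedes it below -/
import Mathlib

section
/- Let G be a finite connected weighted undirected graph and let μ, ν ∈ P(V). Then strong duality holds between the measure min-cut and max-flow linear programs: the optimal value of (minimize Σ_{(i,j)∈E'} w_{ij} k_{ij} over k ∈ ℝ^{E'}, ψ ∈ ℝ^n subject to k ≥ 0, k_{ij} ≥ ψ_i − ψ_j, (μ−ν)ᵀψ ≥ 1) equals the optimal value of (maximize f over f ∈ ℝ, J ∈ ℝ^{E'} subject to f ≥ 0, 0 ≤ J_{ij} ≤ w_{ij} for all (i,j) ∈ E', and B̃J = f(μ−ν)), where B̃ ∈ ℝ^{n×E'} is the oriented node-edge incidence matrix with respect to E' (column of (i,j) equals e_i − e_j). -/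
open Matrix

/-!
Weak duality is the pairing identity `B̃J ⬝ᵥ ψ = ∑ₑ (J⁺ₑ - J⁻ₑ) (ψ (s e) - ψ (t e))`: for a flow
within capacities it is at most the cut cost `∑ₑ wₑ |ψ (s e) - ψ (t e)|`, which is the cheapest
value of the min-cut objective at the potential `ψ`. For strong duality, the divergences of flows
within capacities form a compact convex set `D`, whose support function is the cut cost (saturate
the edges along which `ψ` decreases). If `f (μ - ν) ∉ D`, a hyperplane `ψ` separating it from `D`
has cut cost below `f ((μ - ν) ⬝ᵥ ψ)`, and normalising `ψ` gives a cut of cost below `f`.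
-/

theorem exists_dotProduct_lt_of_notMem {ι : Type*} [Fintype ι] {D : Set (ι → ℝ)}
    (hconv : Convex ℝ D) (hclosed : IsClosed D) {x : ι → ℝ} (hx : x ∉ D) :
    ∃ ψ : ι → ℝ, ∀ y ∈ D, y ⬝ᵥ ψ < x ⬝ᵥ ψ := by
  classical
  obtain ⟨g, u, hgD, hgx⟩ := geometric_hahn_banach_closed_point hconv hclosed hx
  have hg : ∀ y, g y = y ⬝ᵥ fun i => g fun j => if i = j then 1 else 0 :=
    (g : (ι → ℝ) →ₗ[ℝ] ℝ).pi_apply_eq_sum_univ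
  exact ⟨_, fun y hy => hg y ▸ hg x ▸ (hgD y hy).trans hgx⟩

namespace MeasureFlow

variable {n N : ℕ} (s t : Fin N → Fin n)

/-- The product `B̃J`, where `J e true` is the flow on `(s e, t e)` and `J e false` the flow on
`(t e, s e)`. -/
noncomputable def divergence : (Fin N → Bool → ℝ) →ₗ[ℝ] (Fin n → ℝ) where
  toFun J v := ∑ e, (J e true - J e false) *
      ((if s e = v then (1:ℝ) else 0) - (if t e = v then (1:ℝ) else 0))
  map_add' J K := by
    ext v
    simp only [Pi.add_apply, ← Finset.sum_add_distrib]
    exact Finset.sum_congr rfl fun e _ => by ring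
  map_smul' r J := by
    ext v
    simp only [Pi.smul_apply, smul_eq_mul, RingHom.id_apply, Finset.mul_sum]
    exact Finset.sum_congr rfl fun e _ => by ring

theorem divergence_dotProduct (J : Fin N → Bool → ℝ) (ψ : Fin n → ℝ) :
    divergence s t J ⬝ᵥ ψ = ∑ e, (J e true - J e false) * (ψ (s e) - ψ (t e)) := by
  simp only [dotProduct, divergence, LinearMap.coe_mk, AddHom.coe_mk, Finset.sum_mul]
  rw [Finset.sum_comm]
  refine Finset.sum_congr rfl fun e _ => ?_
  simp [mul_sub, sub_mul, Finset.sum_sub_distrib, ite_mul]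

def capacityBox (w : Fin N → ℝ) : Set (Fin N → Bool → ℝ) :=
  {J | ∀ e b, J e b ∈ Set.Icc 0 (w e)}

theorem capacityBox_eq_pi (w : Fin N → ℝ) :
    capacityBox w = Set.univ.pi fun e => Set.univ.pi fun _ => Set.Icc 0 (w e) := by
  ext J
  simp [capacityBox]

theorem isCompact_capacityBox (w : Fin N → ℝ) : IsCompact (capacityBox w) := by
  rw [capacityBox_eq_pi]
  exact isCompact_univ_pi fun _ => isCompact_univ_pi fun _ => isCompact_Icc

theorem convex_capacityBox (w : Fin N → ℝ) : Convex ℝ (capacityBox w) := by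
  rw [capacityBox_eq_pi]
  exact convex_pi fun _ _ => convex_pi fun _ _ => convex_Icc _ _

def cutCost (w : Fin N → ℝ) (ψ : Fin n → ℝ) : ℝ :=
  ∑ e, w e * |ψ (s e) - ψ (t e)|

variable {s t} {w : Fin N → ℝ}

theorem cutCost_nonneg (hw : ∀ e, 0 ≤ w e) (ψ : Fin n → ℝ) : 0 ≤ cutCost s t w ψ :=
  Finset.sum_nonneg fun e _ => mul_nonneg (hw e) (abs_nonneg _)

theorem cutCost_smul {c : ℝ} (hc : 0 ≤ c) (ψ : Fin n → ℝ) :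
    cutCost s t w (c • ψ) = c * cutCost s t w ψ := by
  simp only [cutCost, Finset.mul_sum, Pi.smul_apply, smul_eq_mul, ← mul_sub, abs_mul,
    abs_of_nonneg hc]
  exact Finset.sum_congr rfl fun e _ => by ring

theorem cutCost_eq_sum_posPart (ψ : Fin n → ℝ) :
    cutCost s t w ψ = ∑ e, (w e * (ψ (s e) - ψ (t e))⁺ + w e * (ψ (t e) - ψ (s e))⁺) := by
  refine Finset.sum_congr rfl fun e _ => ?_
  rw [← mul_add, ← posPart_add_negPart, ← posPart_neg, neg_sub]

theorem cutCost_le_sum {k : Fin N → Bool → ℝ} {ψ : Fin n → ℝ} (hw : ∀ e, 0 ≤ w e)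
    (hk : ∀ e b, 0 ≤ k e b) (hkt : ∀ e, ψ (s e) - ψ (t e) ≤ k e true)
    (hkf : ∀ e, ψ (t e) - ψ (s e) ≤ k e false) :
    cutCost s t w ψ ≤ ∑ e, (w e * k e true + w e * k e false) := by
  rw [cutCost_eq_sum_posPart]
  gcongr with e
  · exact hw e
  · exact sup_le (hkt e) (hk e true)
  · exact hw e
  · exact sup_le (hkf e) (hk e false)

theorem dotProduct_divergence_le_cutCost {J : Fin N → Bool → ℝ} (hJ : J ∈ capacityBox w)
    (ψ : Fin n → ℝ) : divergence s t J ⬝ᵥ ψ ≤ cutCost s t w ψ := by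
  rw [divergence_dotProduct]
  refine Finset.sum_le_sum fun e _ => ?_
  obtain ⟨hJt, hJtw⟩ := hJ e true
  obtain ⟨hJf, hJfw⟩ := hJ e false
  calc (J e true - J e false) * (ψ (s e) - ψ (t e))
      ≤ |J e true - J e false| * |ψ (s e) - ψ (t e)| := by
        rw [← abs_mul]; exact le_abs_self _
    _ ≤ w e * |ψ (s e) - ψ (t e)| := by
        gcongr; exact abs_sub_le_of_nonneg_of_le hJt hJtw hJf hJfw

theorem exists_dotProduct_divergence_eq_cutCost (hw : ∀ e, 0 ≤ w e) (ψ : Fin n → ℝ) :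
    ∃ J ∈ capacityBox w, divergence s t J ⬝ᵥ ψ = cutCost s t w ψ := by
  -- saturate every oriented edge along which `ψ` decreases
  let J : Fin N → Bool → ℝ := fun e b =>
    if 0 < (if b then ψ (s e) - ψ (t e) else ψ (t e) - ψ (s e)) then w e else 0
  refine ⟨J, fun e b => ?_, ?_⟩
  · dsimp only [J]; split_ifs <;> simp [hw e]
  · rw [divergence_dotProduct]
    refine Finset.sum_congr rfl fun e _ => ?_
    dsimp only [J]
    rcases lt_trichotomy (ψ (s e) - ψ (t e)) 0 with h | h | h
    · rw [if_neg (by simpa using h.le), if_pos (by simpa using h), abs_of_neg h]; ring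
    · simp [h]
    · rw [if_pos (by simpa using h), if_neg (by simpa using h.le), abs_of_pos h]; ring

theorem exists_cutCost_lt_of_smul_notMem (hw : ∀ e, 0 ≤ w e) {d : Fin n → ℝ} {f : ℝ}
    (hf : 0 < f) (hfd : f • d ∉ divergence s t '' capacityBox w) :
    ∃ ψ, 1 ≤ d ⬝ᵥ ψ ∧ cutCost s t w ψ < f := by
  have hD : IsCompact (divergence s t '' capacityBox w) :=
    (isCompact_capacityBox w).image (divergence s t).continuous_of_finiteDimensional
  obtain ⟨ψ, hψ⟩ := exists_dotProduct_lt_of_notMem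
    ((convex_capacityBox w).linear_image (divergence s t)) hD.isClosed hfd
  obtain ⟨J, hJ, hJψ⟩ := exists_dotProduct_divergence_eq_cutCost hw ψ
  have hlt : cutCost s t w ψ < f * (d ⬝ᵥ ψ) := by
    rw [← hJψ]
    simpa only [smul_dotProduct, smul_eq_mul] using hψ _ ⟨J, hJ, rfl⟩
  have ha : 0 < d ⬝ᵥ ψ := pos_of_mul_pos_right ((cutCost_nonneg hw ψ).trans_lt hlt) hf.le
  refine ⟨(d ⬝ᵥ ψ)⁻¹ • ψ, by rw [dotProduct_smul, smul_eq_mul, inv_mul_cancel₀ ha.ne'], ?_⟩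
  rw [cutCost_smul (inv_nonneg.mpr ha.le), inv_mul_lt_iff₀ ha, mul_comm]
  exact hlt

variable (s t w)

def minCutValues (d : Fin n → ℝ) : Set ℝ :=
  {c | ∃ (k : Fin N → Bool → ℝ) (ψ : Fin n → ℝ),
    (∀ e b, 0 ≤ k e b) ∧
    (∀ e, ψ (s e) - ψ (t e) ≤ k e true) ∧
    (∀ e, ψ (t e) - ψ (s e) ≤ k e false) ∧
    1 ≤ d ⬝ᵥ ψ ∧
    c = ∑ e, (w e * k e true + w e * k e false)}

def maxFlowValues (d : Fin n → ℝ) : Set ℝ :=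
  {f | 0 ≤ f ∧ ∃ J ∈ capacityBox w, ∀ v, divergence s t J v = f * d v}

variable {s t w}

theorem mem_maxFlowValues {d : Fin n → ℝ} {f : ℝ} :
    f ∈ maxFlowValues s t w d ↔ 0 ≤ f ∧ f • d ∈ divergence s t '' capacityBox w := by
  simp only [maxFlowValues, Set.mem_ofPred_eq, Set.mem_image, funext_iff, Pi.smul_apply,
    smul_eq_mul]

theorem cutCost_mem_minCutValues {d ψ : Fin n → ℝ} (hψ : 1 ≤ d ⬝ᵥ ψ) :
    cutCost s t w ψ ∈ minCutValues s t w d :=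
  ⟨fun e b => if b then (ψ (s e) - ψ (t e))⁺ else (ψ (t e) - ψ (s e))⁺, ψ,
    fun e b => by cases b <;> exact posPart_nonneg _, fun e => le_posPart _,
    fun e => le_posPart _, hψ, cutCost_eq_sum_posPart ψ⟩

theorem le_of_mem_maxFlowValues_of_mem_minCutValues (hw : ∀ e, 0 ≤ w e) {d : Fin n → ℝ}
    {f c : ℝ} (hf : f ∈ maxFlowValues s t w d) (hc : c ∈ minCutValues s t w d) : f ≤ c := by
  obtain ⟨hf0, J, hJ, hdiv⟩ := mem_maxFlowValues.mp hf
  obtain ⟨k, ψ, hk, hkt, hkf, hψ, rfl⟩ := hc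
  calc f ≤ f * (d ⬝ᵥ ψ) := le_mul_of_one_le_right hf0 hψ
    _ = divergence s t J ⬝ᵥ ψ := by rw [hdiv, smul_dotProduct, smul_eq_mul]
    _ ≤ cutCost s t w ψ := dotProduct_divergence_le_cutCost hJ ψ
    _ ≤ _ := cutCost_le_sum hw hk hkt hkf

theorem minCutValues_nonempty {d : Fin n → ℝ} (hd : d ≠ 0) :
    (minCutValues s t w d).Nonempty := by
  have hdd : 0 < d ⬝ᵥ d := (Fintype.sum_nonneg fun i => mul_self_nonneg (d i)).lt_of_ne'
    (dotProduct_self_eq_zero.not.mpr hd)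
  refine ⟨_, cutCost_mem_minCutValues (ψ := (d ⬝ᵥ d)⁻¹ • d) ?_⟩
  rw [dotProduct_smul, smul_eq_mul, inv_mul_cancel₀ hdd.ne']

theorem minCutValues_zero : minCutValues s t w 0 = ∅ := by
  refine Set.eq_empty_of_forall_notMem fun c ⟨_, ψ, _, _, _, hψ, _⟩ => ?_
  rw [zero_dotProduct] at hψ
  exact absurd hψ zero_lt_one.not_ge

theorem not_bddAbove_maxFlowValues_zero (hw : ∀ e, 0 ≤ w e) :
    ¬ BddAbove (maxFlowValues s t w (0 : Fin n → ℝ)) := by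
  rw [not_bddAbove_iff]
  refine fun M => ⟨max M 0 + 1, ⟨by positivity, 0, fun e b => ⟨le_rfl, hw e⟩, fun v => ?_⟩, ?_⟩
  · simp
  · linarith [le_max_left M 0]

theorem sInf_minCutValues_eq_sSup_maxFlowValues (hw : ∀ e, 0 ≤ w e) (d : Fin n → ℝ) :
    sInf (minCutValues s t w d) = sSup (maxFlowValues s t w d) := by
  obtain rfl | hd := eq_or_ne d 0
  -- both sides are the junk value `0` of `sInf ∅` and of `sSup` of an unbounded set
  · rw [minCutValues_zero, Real.sInf_empty, Real.sSup_of_not_bddAbove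
      (not_bddAbove_maxFlowValues_zero hw)]
  have hS := minCutValues_nonempty (s := s) (t := t) (w := w) hd
  have hT : (0 : ℝ) ∈ maxFlowValues s t w d :=
    ⟨le_rfl, 0, fun e b => ⟨le_rfl, hw e⟩, fun v => by simp⟩
  have hweak : ∀ f ∈ maxFlowValues s t w d, ∀ c ∈ minCutValues s t w d, f ≤ c :=
    fun f hf c hc => le_of_mem_maxFlowValues_of_mem_minCutValues hw hf hc
  have hTbdd : BddAbove (maxFlowValues s t w d) :=
    ⟨hS.some, fun f hf => hweak f hf _ hS.some_mem⟩
  refine le_antisymm (le_of_forall_gt_imp_ge_of_dense fun f hf => ?_)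
    (csSup_le ⟨0, hT⟩ fun f hf => le_csInf hS (hweak f hf))
  have hf0 : 0 < f := (le_csSup hTbdd hT).trans_lt hf
  have hfd : f • d ∉ divergence s t '' capacityBox w := fun hfd =>
    (le_csSup hTbdd (mem_maxFlowValues.mpr ⟨hf0.le, hfd⟩)).not_gt hf
  obtain ⟨ψ, hψ, hcut⟩ := exists_cutCost_lt_of_smul_notMem hw hf0 hfd
  exact (csInf_le ⟨0, hweak 0 hT⟩ (cutCost_mem_minCutValues hψ)).trans hcut.le

end MeasureFlow

theorem measure_maxflow_mincut_strong_duality_general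
    (n N : ℕ) (s t : Fin N → Fin n) (w : Fin N → ℝ)
    (hw : ∀ e, 0 < w e)
    (μ ν : Fin n → ℝ) :
    sInf {c : ℝ | ∃ (k : Fin N → Bool → ℝ) (ψ : Fin n → ℝ),
          (∀ e b, 0 ≤ k e b) ∧
          (∀ e, ψ (s e) - ψ (t e) ≤ k e true) ∧
          (∀ e, ψ (t e) - ψ (s e) ≤ k e false) ∧
          1 ≤ (μ - ν) ⬝ᵥ ψ ∧
          c = ∑ e, (w e * k e true + w e * k e false)}
      = sSup {f : ℝ | 0 ≤ f ∧ ∃ J : Fin N → Bool → ℝ,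
          (∀ e b, 0 ≤ J e b ∧ J e b ≤ w e) ∧
          (∀ v, (∑ e, (J e true - J e false) *
              ((if s e = v then (1:ℝ) else 0) - (if t e = v then (1:ℝ) else 0)))
            = f * (μ v - ν v))} :=
  MeasureFlow.sInf_minCutValues_eq_sSup_maxFlowValues (fun e => (hw e).le) (μ - ν)

/-- **Generalized Max Flow–Min Cut, strong duality.**
For a finite connected weighted undirected graph (vertices `Fin n`, edges indexed by
`Fin N` with endpoints `s e ≠ t e` and positive weights `w e`; oriented edges
`E' = {(s e, t e), (t e, s e)}` encoded as `Fin N × Bool`) and probability measures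
`μ, ν` on the vertices, the optimal value of the measure min-cut LP
(minimize `Σ_{(i,j)∈E'} w_{ij} k_{ij}` subject to `k ≥ 0`, `k_{ij} ≥ ψ_i - ψ_j`,
`(μ-ν)ᵀψ ≥ 1`) equals the optimal value of the measure max-flow LP
(maximize `f ≥ 0` over flows `0 ≤ J ≤ w` on oriented edges with `B̃J = f(μ-ν)`,
where `B̃` has the column `e_i - e_j` for the oriented edge `(i,j)`). -/
theorem measure_maxflow_mincut_strong_duality
    (n N : ℕ) (s t : Fin N → Fin n) (w : Fin N → ℝ)
    (hw : ∀ e, 0 < w e) (hst : ∀ e, s e ≠ t e)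
    (hconn : (SimpleGraph.fromRel fun i j => ∃ e, s e = i ∧ t e = j).Connected)
    (μ ν : Fin n → ℝ)
    (hμ : (∀ i, 0 ≤ μ i) ∧ ∑ i, μ i = 1)
    (hν : (∀ i, 0 ≤ ν i) ∧ ∑ i, ν i = 1) :
    sInf {c : ℝ | ∃ (k : Fin N → Bool → ℝ) (ψ : Fin n → ℝ),
          (∀ e b, 0 ≤ k e b) ∧
          (∀ e, ψ (s e) - ψ (t e) ≤ k e true) ∧
          (∀ e, ψ (t e) - ψ (s e) ≤ k e false) ∧
          1 ≤ (μ - ν) ⬝ᵥ ψ ∧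
          c = ∑ e, (w e * k e true + w e * k e false)}
      = sSup {f : ℝ | 0 ≤ f ∧ ∃ J : Fin N → Bool → ℝ,
          (∀ e b, 0 ≤ J e b ∧ J e b ≤ w e) ∧
          (∀ v, (∑ e, (J e true - J e false) *
              ((if s e = v then (1:ℝ) else 0) - (if t e = v then (1:ℝ) else 0)))
            = f * (μ v - ν v))} :=
  measure_maxflow_mincut_strong_duality_general n N s t w hw μ ν
end

section
/- Let G be a finite connected weighted undirected graph, let μ, ν ∈ P(V) with μ ≠ ν, let 1 < p < ∞ and let q satisfy 1/p + 1/q = 1. Then C_p(μ,ν) = 1 / B_{w^{1−q},q}(μ,ν); that is, ( inf { (Σ_{{i,j}∈E} w_{ij}|φ_i − φ_j|^p)^{1/p} : φ ∈ ℝ^n, φᵀ(μ−ν) = 1 } ) · ( inf { (Σ_{e∈E} w_e^{1−q} |J_e|^q)^{1/q} : J ∈ ℝ^E, BJ = μ − ν } ) = 1. -/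
/-!
For every admissible potential `φ` and flow `J`, summation by parts gives
`1 = φ ⬝ᵥ (μ - ν) = ∑ₑ Jₑ (φ (s e) - φ (t e))`, and the weighted Hölder inequality bounds this by
`Eₚ(φ)^(1/p) · B(J)`, so the product of the two infima is at least `1`.

For equality, minimize the energy `Eₚ(φ) = ∑ₑ wₑ |φ (s e) - φ (t e)|^p` on the hyperplane
`φ ⬝ᵥ (μ - ν) = 1`. The energy is invariant under constants, and on a connected graph it controls
`φ - φ i₀` along walks, so a minimizer exists by compactness and its energy is positive. The
Euler–Lagrange equation says that the `p`-Laplacian current `wₑ |dφₑ|^(p-2) dφₑ` of the minimizer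
has divergence `Eₚ(φ) (μ - ν)`; rescaled by `1 / Eₚ(φ)` it is a flow for which Hölder is an
equality, with cost `Eₚ(φ)^(-1/p)`.
-/

open Matrix

noncomputable section

variable {V ι : Type*}

theorem abs_rpow_sub_two_mul_self {p : ℝ} (x : ℝ) (hp : p ≠ 0) :
    |x| ^ (p - 2) * x * x = |x| ^ p := by
  rw [mul_assoc, ← abs_mul_abs_self, ← sq, ← Real.rpow_natCast,
    ← Real.rpow_add' (abs_nonneg x) (by simpa using hp)]
  norm_num

theorem abs_rpow_sub_two_mul_abs {p : ℝ} (x : ℝ) (hp : p ≠ 1) :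
    |x| ^ (p - 2) * |x| = |x| ^ (p - 1) := by
  conv_rhs => rw [show p - 1 = (p - 2) + 1 by ring]
  rw [Real.rpow_add' (abs_nonneg x) (by norm_num [sub_add, sub_ne_zero, hp]), Real.rpow_one]

theorem inner_le_weighted_Lp_mul_Lq [Fintype ι] {w : ι → ℝ} {p q : ℝ} (hw : ∀ e, 0 < w e)
    (hpq : p.HolderConjugate q) (a b : ι → ℝ) :
    ∑ e, a e * b e ≤
      (∑ e, w e * |a e| ^ p) ^ (1 / p) * (∑ e, w e ^ (1 - q) * |b e| ^ q) ^ (1 / q) := by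
  have hexp : -(1 / p) * q = 1 - q := by
    field_simp [hpq.pos.ne']
    linarith [hpq.mul_eq_add]
  have hpow : ∀ (c x r : ℝ) e, |w e ^ c * x| ^ r = w e ^ (c * r) * |x| ^ r := fun c x r e => by
    rw [abs_mul, Real.mul_rpow (abs_nonneg _) (abs_nonneg _),
      abs_of_pos (Real.rpow_pos_of_pos (hw e) c), ← Real.rpow_mul (hw e).le]
  calc ∑ e, a e * b e = ∑ e, (w e ^ (1 / p) * a e) * (w e ^ (-(1 / p)) * b e) :=
        Finset.sum_congr rfl fun e _ => by
          rw [mul_mul_mul_comm, ← Real.rpow_add (hw e), add_neg_cancel, Real.rpow_zero, one_mul]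
    _ ≤ (∑ e, |w e ^ (1 / p) * a e| ^ p) ^ (1 / p) *
          (∑ e, |w e ^ (-(1 / p)) * b e| ^ q) ^ (1 / q) := Real.inner_le_Lp_mul_Lq _ _ _ hpq
    _ = _ := by simp only [hpow, hexp, one_div_mul_cancel hpq.pos.ne', Real.rpow_one]

theorem exists_dotProduct_eq_one {K : Type*} [Field K] [LinearOrder K] [IsStrictOrderedRing K]
    [Fintype V] {δ : V → K} (hδ : δ ≠ 0) : ∃ φ, φ ⬝ᵥ δ = 1 :=
  ⟨(δ ⬝ᵥ δ)⁻¹ • δ, by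
    rw [smul_dotProduct, smul_eq_mul, inv_mul_cancel₀ (dotProduct_self_eq_zero.not.mpr hδ)]⟩

theorem nonempty_of_dotProduct_eq_one {R : Type*} [Semiring R] [Nontrivial R] [Fintype V]
    {φ δ : V → R} (h : φ ⬝ᵥ δ = 1) : Nonempty V := by
  by_contra hV
  rw [not_nonempty_iff] at hV
  simp [dotProduct] at h

theorem eq_smul_of_forall_dotProduct_eq_zero {R : Type*} [CommRing R] [Fintype V]
    [DecidableEq V] {δ φ g : V → R} (hφ : φ ⬝ᵥ δ = 1)
    (h : ∀ ψ, ψ ⬝ᵥ δ = 0 → ψ ⬝ᵥ g = 0) : g = (φ ⬝ᵥ g) • δ := by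
  funext v
  have hv := h (Pi.single v 1 - δ v • φ) (by
    simp [sub_dotProduct, smul_dotProduct, single_dotProduct, hφ])
  simp only [sub_dotProduct, smul_dotProduct, single_dotProduct, one_mul, smul_eq_mul,
    sub_eq_zero] at hv
  simp [hv, mul_comm]

theorem sub_const_dotProduct {R : Type*} [CommRing R] [Fintype V] {δ : V → R}
    (hδ : ∑ v, δ v = 0) (φ : V → R) (c : R) :
    (fun v => φ v - c) ⬝ᵥ δ = φ ⬝ᵥ δ := by
  simp only [dotProduct, sub_mul, Finset.sum_sub_distrib, ← Finset.mul_sum, hδ, mul_zero,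
    sub_zero]

variable (s t : ι → V)

def supportGraph : SimpleGraph V :=
  SimpleGraph.fromRel fun i j => ∃ e, s e = i ∧ t e = j

/-- The divergence `B J` of an edge flow, `B` being the oriented incidence matrix. -/
def netFlow [Fintype ι] [DecidableEq V] (J : ι → ℝ) (v : V) : ℝ :=
  ∑ e, J e * ((if s e = v then 1 else 0) - (if t e = v then 1 else 0))

def pEnergy [Fintype ι] (w : ι → ℝ) (p : ℝ) (φ : V → ℝ) : ℝ :=
  ∑ e, w e * |φ (s e) - φ (t e)| ^ p

/-- The `p`-Laplacian current of a potential: the gradient of `pEnergy / p`, read along edges. -/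
def pCurrent (w : ι → ℝ) (p : ℝ) (φ : V → ℝ) (e : ι) : ℝ :=
  w e * |φ (s e) - φ (t e)| ^ (p - 2) * (φ (s e) - φ (t e))

def beckmannEnergy [Fintype ι] (w : ι → ℝ) (q : ℝ) (J : ι → ℝ) : ℝ :=
  ∑ e, w e ^ (1 - q) * |J e| ^ q

variable {s t}

theorem abs_sub_le_length_mul_of_walk {φ : V → ℝ} {R : ℝ}
    (h : ∀ e, |φ (s e) - φ (t e)| ≤ R) {u v : V} (W : (supportGraph s t).Walk u v) :
    |φ u - φ v| ≤ W.length * R := by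
  induction W with
  | nil => simp
  | @cons u u' v hadj W ih =>
    have hstep : |φ u - φ u'| ≤ R := by
      obtain ⟨-, ⟨e, rfl, rfl⟩ | ⟨e, rfl, rfl⟩⟩ := SimpleGraph.fromRel_adj _ _ _ |>.mp hadj
      · exact h e
      · rw [abs_sub_comm]; exact h e
    calc |φ u - φ v| ≤ |φ u - φ u'| + |φ u' - φ v| := abs_sub_le _ _ _
      _ ≤ R + W.length * R := add_le_add hstep ih
      _ = (W.cons hadj).length * R := by rw [SimpleGraph.Walk.length_cons]; push_cast; ring

variable [Fintype ι]

theorem dotProduct_netFlow [DecidableEq V] [Fintype V] (ψ : V → ℝ) (J : ι → ℝ) :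
    ψ ⬝ᵥ netFlow s t J = ∑ e, J e * (ψ (s e) - ψ (t e)) := by
  simp only [dotProduct, netFlow, Finset.mul_sum]
  rw [Finset.sum_comm]
  refine Finset.sum_congr rfl fun e _ => ?_
  simp only [mul_sub, mul_ite, mul_one, mul_zero, Finset.sum_sub_distrib,
    Finset.sum_ite_eq, Finset.mem_univ, if_true]
  ring

theorem netFlow_smul [DecidableEq V] (c : ℝ) (J : ι → ℝ) :
    netFlow s t (c • J) = c • netFlow s t J := by
  funext v
  simp only [netFlow, Pi.smul_apply, smul_eq_mul, Finset.mul_sum, mul_assoc]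

variable {w : ι → ℝ} {p q : ℝ}

theorem pEnergy_nonneg (hw : ∀ e, 0 ≤ w e) (φ : V → ℝ) : 0 ≤ pEnergy s t w p φ :=
  Finset.sum_nonneg fun e _ => mul_nonneg (hw e) (Real.rpow_nonneg (abs_nonneg _) p)

theorem continuous_pEnergy (hp : 0 ≤ p) : Continuous (pEnergy s t w p) :=
  continuous_finsetSum _ fun e _ => continuous_const.mul <|
    ((continuous_apply (s e)).sub (continuous_apply (t e))).abs.rpow_const fun _ => Or.inr hp

theorem pEnergy_sub_const (φ : V → ℝ) (c : ℝ) :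
    pEnergy s t w p (fun v => φ v - c) = pEnergy s t w p φ := by
  simp only [pEnergy, sub_sub_sub_cancel_right]

theorem abs_sub_le_of_pEnergy_le (hw : ∀ e, 0 < w e) (hp : 0 < p) {φ : V → ℝ} {c : ℝ}
    (hφ : pEnergy s t w p φ ≤ c) (e : ι) : |φ (s e) - φ (t e)| ≤ (c / w e) ^ (1 / p) := by
  have hterm : w e * |φ (s e) - φ (t e)| ^ p ≤ c :=
    (Finset.single_le_sum (f := fun e => w e * |φ (s e) - φ (t e)| ^ p)
      (fun e _ => mul_nonneg (hw e).le (Real.rpow_nonneg (abs_nonneg _) p))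
      (Finset.mem_univ e)).trans hφ
  calc |φ (s e) - φ (t e)| = (|φ (s e) - φ (t e)| ^ p) ^ (1 / p) := by
        rw [← Real.rpow_mul (abs_nonneg _), mul_one_div_cancel hp.ne', Real.rpow_one]
    _ ≤ (c / w e) ^ (1 / p) := by
        gcongr
        rw [le_div_iff₀ (hw e), mul_comm]
        exact hterm

theorem isBounded_pEnergy_sublevel (hconn : (supportGraph s t).Connected)
    (hw : ∀ e, 0 < w e) (hp : 0 < p) (i₀ : V) (c : ℝ) :
    Bornology.IsBounded {φ : V → ℝ | φ i₀ = 0 ∧ pEnergy s t w p φ ≤ c} := by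
  set R := ∑ e, (c / w e) ^ (1 / p)
  have hedge : ∀ φ : V → ℝ, pEnergy s t w p φ ≤ c → ∀ e, |φ (s e) - φ (t e)| ≤ R := by
    intro φ hφ e
    have hc : 0 ≤ c := (pEnergy_nonneg (fun e => (hw e).le) φ).trans hφ
    exact (abs_sub_le_of_pEnergy_le hw hp hφ e).trans <|
      Finset.single_le_sum (f := fun e => (c / w e) ^ (1 / p))
        (fun e _ => Real.rpow_nonneg (div_nonneg hc (hw e).le) _) (Finset.mem_univ e)
  refine Bornology.forall_isBounded_image_eval_iff.mp fun v => ?_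
  obtain ⟨W⟩ := hconn.preconnected v i₀
  refine isBounded_iff_forall_norm_le.mpr ⟨W.length * R, ?_⟩
  rintro _ ⟨φ, ⟨hφ₀, hφ⟩, rfl⟩
  simpa [hφ₀] using abs_sub_le_length_mul_of_walk (hedge φ hφ) W

theorem exists_isMinOn_pEnergy [Fintype V] (hconn : (supportGraph s t).Connected)
    (hw : ∀ e, 0 < w e) (hp : 0 < p) {δ : V → ℝ} (hδ : ∑ v, δ v = 0) {φ₀ : V → ℝ}
    (hφ₀ : φ₀ ⬝ᵥ δ = 1) :
    ∃ φ, φ ⬝ᵥ δ = 1 ∧ IsMinOn (pEnergy s t w p) {φ | φ ⬝ᵥ δ = 1} φ := by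
  obtain ⟨i₀⟩ := nonempty_of_dotProduct_eq_one hφ₀
  -- Energy and constraint are invariant under adding constants, so normalize `φ i₀ = 0`.
  set K := {φ : V → ℝ | φ ⬝ᵥ δ = 1} ∩
    {φ | φ i₀ = 0 ∧ pEnergy s t w p φ ≤ pEnergy s t w p φ₀}
  have hnorm : ∀ φ : V → ℝ, φ ⬝ᵥ δ = 1 → pEnergy s t w p φ ≤ pEnergy s t w p φ₀ →
      (fun v => φ v - φ i₀) ∈ K := fun φ hφ hle =>
    ⟨(sub_const_dotProduct hδ φ _).trans hφ, sub_self _, (pEnergy_sub_const φ _).trans_le hle⟩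
  have hK : IsCompact K := by
    refine Metric.isCompact_of_isClosed_isBounded ?_
      ((isBounded_pEnergy_sublevel hconn hw hp i₀ _).subset Set.inter_subset_right)
    exact (isClosed_eq (by fun_prop) continuous_const).inter <|
      (isClosed_eq (continuous_apply i₀) continuous_const).inter <|
        isClosed_le (continuous_pEnergy hp.le) continuous_const
  obtain ⟨φs, hφsK, hmin⟩ :=
    hK.exists_isMinOn ⟨_, hnorm φ₀ hφ₀ le_rfl⟩
      (continuous_pEnergy (s := s) (t := t) (w := w) hp.le).continuousOn
  rw [isMinOn_iff] at hmin
  refine ⟨φs, hφsK.1, isMinOn_iff.mpr fun φ hφ => ?_⟩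
  rcases le_total (pEnergy s t w p φ) (pEnergy s t w p φ₀) with hle | hle
  · exact (hmin _ (hnorm φ hφ hle)).trans_eq (pEnergy_sub_const φ _)
  · exact (hmin _ (hnorm φ₀ hφ₀ le_rfl)).trans <| (pEnergy_sub_const φ₀ _).trans_le hle

theorem pEnergy_pos [Fintype V] (hconn : (supportGraph s t).Connected)
    (hw : ∀ e, 0 < w e) (hp : 0 < p) {δ : V → ℝ} (hδ : ∑ v, δ v = 0) {φ : V → ℝ}
    (hφ : φ ⬝ᵥ δ = 1) : 0 < pEnergy s t w p φ := by
  refine (pEnergy_nonneg (fun e => (hw e).le) φ).lt_of_ne fun h0 => ?_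
  have hedge : ∀ e, |φ (s e) - φ (t e)| ≤ 0 := fun e => by
    simpa [Real.zero_rpow (inv_ne_zero hp.ne')] using
      abs_sub_le_of_pEnergy_le hw hp h0.symm.le e
  obtain ⟨i₀⟩ := nonempty_of_dotProduct_eq_one hφ
  have hconst : (fun v => φ v - φ i₀) = 0 := funext fun v => by
    obtain ⟨W⟩ := hconn.preconnected v i₀
    simpa using abs_sub_le_length_mul_of_walk hedge W
  simpa [hconst] using (sub_const_dotProduct hδ φ (φ i₀)).trans hφ

theorem hasDerivAt_pEnergy_add_smul (hp : 1 < p) (φ ψ : V → ℝ) :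
    HasDerivAt (fun τ : ℝ => pEnergy s t w p (φ + τ • ψ))
      (p * ∑ e, pCurrent s t w p φ e * (ψ (s e) - ψ (t e))) 0 := by
  have hedge : ∀ e, HasDerivAt
      (fun τ : ℝ => w e * |φ (s e) - φ (t e) + τ * (ψ (s e) - ψ (t e))| ^ p)
      (p * (pCurrent s t w p φ e * (ψ (s e) - ψ (t e)))) 0 := fun e => by
    have hline : HasDerivAt (fun τ : ℝ => φ (s e) - φ (t e) + τ * (ψ (s e) - ψ (t e)))
        (ψ (s e) - ψ (t e)) 0 := by
      simpa using
        ((hasDerivAt_id (0 : ℝ)).mul_const (ψ (s e) - ψ (t e))).const_add (φ (s e) - φ (t e))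
    have := ((hasDerivAt_abs_rpow (φ (s e) - φ (t e) + 0 * (ψ (s e) - ψ (t e))) hp).comp 0
      hline).const_mul (w e)
    exact this.congr_deriv (by simp only [pCurrent, zero_mul, add_zero]; ring)
  have hsum : (fun τ : ℝ => pEnergy s t w p (φ + τ • ψ)) =
      fun τ => ∑ e, w e * |φ (s e) - φ (t e) + τ * (ψ (s e) - ψ (t e))| ^ p := by
    funext τ
    simp only [pEnergy, Pi.add_apply, Pi.smul_apply, smul_eq_mul]
    refine Finset.sum_congr rfl fun e _ => ?_
    ring_nf
  rw [hsum, Finset.mul_sum]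
  exact HasDerivAt.fun_sum fun e _ => hedge e

theorem dotProduct_netFlow_pCurrent_eq_zero_of_isMinOn [Fintype V] [DecidableEq V]
    (hp : 1 < p) {δ φ ψ : V → ℝ} (hmin : IsMinOn (pEnergy s t w p) {φ | φ ⬝ᵥ δ = 1} φ)
    (hφ : φ ⬝ᵥ δ = 1) (hψ : ψ ⬝ᵥ δ = 0) : ψ ⬝ᵥ netFlow s t (pCurrent s t w p φ) = 0 := by
  have hloc : IsLocalMin (fun τ : ℝ => pEnergy s t w p (φ + τ • ψ)) 0 :=
    Filter.Eventually.of_forall fun τ => by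
      simpa using isMinOn_iff.mp hmin (φ + τ • ψ) (by
        simp [add_dotProduct, smul_dotProduct, hφ, hψ])
  have hderiv := hloc.hasDerivAt_eq_zero (hasDerivAt_pEnergy_add_smul hp φ ψ)
  rw [dotProduct_netFlow]
  exact (mul_eq_zero.mp hderiv).resolve_left (by positivity)

theorem dotProduct_netFlow_pCurrent_self [Fintype V] [DecidableEq V] (hp : p ≠ 0) (φ : V → ℝ) :
    φ ⬝ᵥ netFlow s t (pCurrent s t w p φ) = pEnergy s t w p φ := by
  rw [dotProduct_netFlow]
  refine Finset.sum_congr rfl fun e _ => ?_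
  rw [pCurrent, mul_assoc, mul_assoc, ← mul_assoc (|_| ^ _), abs_rpow_sub_two_mul_self _ hp]

theorem netFlow_pCurrent_of_isMinOn [Fintype V] [DecidableEq V] (hp : 1 < p)
    {δ φ : V → ℝ} (hmin : IsMinOn (pEnergy s t w p) {φ | φ ⬝ᵥ δ = 1} φ) (hφ : φ ⬝ᵥ δ = 1) :
    netFlow s t (pCurrent s t w p φ) = pEnergy s t w p φ • δ := by
  rw [eq_smul_of_forall_dotProduct_eq_zero hφ fun ψ hψ =>
      dotProduct_netFlow_pCurrent_eq_zero_of_isMinOn hp hmin hφ hψ,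
    dotProduct_netFlow_pCurrent_self (by positivity)]

theorem beckmannEnergy_smul (c : ℝ) (J : ι → ℝ) :
    beckmannEnergy w q (c • J) = |c| ^ q * beckmannEnergy w q J := by
  simp only [beckmannEnergy, Finset.mul_sum, Pi.smul_apply, smul_eq_mul, abs_mul,
    Real.mul_rpow (abs_nonneg _) (abs_nonneg _)]
  exact Finset.sum_congr rfl fun e _ => by ring

theorem beckmannEnergy_pCurrent (hw : ∀ e, 0 < w e) (hpq : p.HolderConjugate q) (φ : V → ℝ) :
    beckmannEnergy w q (pCurrent s t w p φ) = pEnergy s t w p φ := by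
  refine Finset.sum_congr rfl fun e _ => ?_
  have hwe := hw e
  rw [pCurrent, mul_assoc, abs_mul, abs_mul, abs_of_pos hwe,
    abs_of_nonneg (Real.rpow_nonneg (abs_nonneg _) _), abs_rpow_sub_two_mul_abs _ hpq.lt.ne',
    Real.mul_rpow hwe.le (Real.rpow_nonneg (abs_nonneg _) _), ← Real.rpow_mul (abs_nonneg _),
    hpq.sub_one_mul_conj, ← mul_assoc, ← Real.rpow_add hwe, sub_add_cancel, Real.rpow_one]

theorem one_le_pEnergy_rpow_mul_beckmannEnergy_rpow [Fintype V] [DecidableEq V]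
    (hw : ∀ e, 0 < w e) (hpq : p.HolderConjugate q) {δ φ : V → ℝ} {J : ι → ℝ}
    (hφ : φ ⬝ᵥ δ = 1) (hJ : netFlow s t J = δ) :
    1 ≤ pEnergy s t w p φ ^ (1 / p) * beckmannEnergy w q J ^ (1 / q) :=
  calc 1 = ∑ e, (φ (s e) - φ (t e)) * J e := by
        rw [← hφ, ← hJ, dotProduct_netFlow]; simp only [mul_comm]
    _ ≤ _ := inner_le_weighted_Lp_mul_Lq hw hpq _ _

theorem isLeast_pEnergy_rpow [Fintype V] (hw : ∀ e, 0 ≤ w e) (hp : 0 < p) {δ φ : V → ℝ}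
    (hmin : IsMinOn (pEnergy s t w p) {φ | φ ⬝ᵥ δ = 1} φ) (hφ : φ ⬝ᵥ δ = 1) :
    IsLeast {c | ∃ φ : V → ℝ, φ ⬝ᵥ δ = 1 ∧ c = pEnergy s t w p φ ^ (1 / p)}
      (pEnergy s t w p φ ^ (1 / p)) := by
  refine ⟨⟨φ, hφ, rfl⟩, ?_⟩
  rintro _ ⟨ψ, hψ, rfl⟩
  exact Real.rpow_le_rpow (pEnergy_nonneg hw φ) (isMinOn_iff.mp hmin ψ hψ)
    (by positivity)

theorem isLeast_beckmannEnergy_rpow [Fintype V] [DecidableEq V] (hw : ∀ e, 0 < w e)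
    (hpq : p.HolderConjugate q) {δ φ : V → ℝ}
    (hmin : IsMinOn (pEnergy s t w p) {φ | φ ⬝ᵥ δ = 1} φ) (hφ : φ ⬝ᵥ δ = 1)
    (hE : 0 < pEnergy s t w p φ) :
    IsLeast {c | ∃ J : ι → ℝ, (∀ v, netFlow s t J v = δ v) ∧ c = beckmannEnergy w q J ^ (1 / q)}
      (pEnergy s t w p φ ^ (1 / p))⁻¹ := by
  set E := pEnergy s t w p φ
  have hJ : netFlow s t (E⁻¹ • pCurrent s t w p φ) = δ := by
    rw [netFlow_smul, netFlow_pCurrent_of_isMinOn hpq.lt hmin hφ, inv_smul_smul₀ hE.ne']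
  have hcost : beckmannEnergy w q (E⁻¹ • pCurrent s t w p φ) ^ (1 / q) = (E ^ (1 / p))⁻¹ := by
    have hexp : (1 - q) * (1 / q) = -(1 / p) := by
      field_simp [hpq.pos.ne', hpq.symm.pos.ne']
      linarith [hpq.mul_eq_add]
    rw [beckmannEnergy_smul, beckmannEnergy_pCurrent hw hpq, abs_of_pos (inv_pos.mpr hE),
      Real.inv_rpow hE.le, inv_mul_eq_div,
      ← Real.rpow_one_sub' hE.le (sub_ne_zero.mpr hpq.symm.lt.ne), ← Real.rpow_mul hE.le, hexp,
      Real.rpow_neg hE.le]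
  refine ⟨⟨_, congrFun hJ, hcost.symm⟩, ?_⟩
  rintro _ ⟨J, hJ', rfl⟩
  exact (inv_le_iff_one_le_mul₀' (by positivity)).mpr <|
    one_le_pEnergy_rpow_mul_beckmannEnergy_rpow hw hpq hφ (funext hJ')

end

theorem p_conductance_beckmann_gauge_duality_general
    (n N : ℕ) (s t : Fin N → Fin n) (w : Fin N → ℝ)
    (hw : ∀ e, 0 < w e)
    (hconn : (SimpleGraph.fromRel fun i j => ∃ e, s e = i ∧ t e = j).Connected)
    (μ ν : Fin n → ℝ)
    (hμ : (∀ i, 0 ≤ μ i) ∧ ∑ i, μ i = 1)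
    (hν : (∀ i, 0 ≤ ν i) ∧ ∑ i, ν i = 1)
    (hμν : μ ≠ ν)
    (p q : ℝ) (hp : 1 < p) (hpq : 1 / p + 1 / q = 1) :
    sInf {c : ℝ | ∃ φ : Fin n → ℝ, φ ⬝ᵥ (μ - ν) = 1 ∧
        c = (∑ e, w e * |φ (s e) - φ (t e)| ^ p) ^ (1 / p)} *
    sInf {c : ℝ | ∃ J : Fin N → ℝ,
        (∀ v, (∑ e, J e * ((if s e = v then (1:ℝ) else 0) - (if t e = v then (1:ℝ) else 0)))
          = μ v - ν v) ∧
        c = (∑ e, w e ^ (1 - q) * |J e| ^ q) ^ (1 / q)} = 1 := by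
  have hpq : p.HolderConjugate q :=
    Real.holderConjugate_iff.mpr ⟨hp, by simpa only [one_div] using hpq⟩
  have hδ : ∑ v, (μ - ν) v = 0 := by simp [Finset.sum_sub_distrib, hμ.2, hν.2]
  obtain ⟨φ₀, hφ₀⟩ := exists_dotProduct_eq_one (sub_ne_zero.mpr hμν)
  obtain ⟨φ, hφ, hmin⟩ := exists_isMinOn_pEnergy hconn hw hpq.pos hδ hφ₀
  have hE : 0 < pEnergy s t w p φ := pEnergy_pos hconn hw hpq.pos hδ hφ
  change sInf {c | ∃ φ : Fin n → ℝ, φ ⬝ᵥ (μ - ν) = 1 ∧ c = pEnergy s t w p φ ^ (1 / p)} *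
    sInf {c | ∃ J, (∀ v, netFlow s t J v = (μ - ν) v) ∧ c = beckmannEnergy w q J ^ (1 / q)} = 1
  rw [(isLeast_pEnergy_rpow (fun e => (hw e).le) hpq.pos hmin hφ).csInf_eq,
    (isLeast_beckmannEnergy_rpow hw hpq hmin hφ hE).csInf_eq, mul_inv_cancel₀ (by positivity)]

/-- **gauge duality, `1 < p < ∞`.**
For a finite connected weighted undirected graph (vertices `Fin n`, edges indexed by
`Fin N` with endpoints `s e ≠ t e`, positive weights `w e`, and node-edge oriented
incidence matrix `B` whose column at edge `e` is `e_{s e} - e_{t e}`), probability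
measures `μ ≠ ν`, and conjugate exponents `1 < p, q < ∞` with `1/p + 1/q = 1`:
`C_p(μ,ν) · B_{w^{1-q},q}(μ,ν) = 1`, i.e.
`inf { (Σ_e w_e |φ_{s e} - φ_{t e}|^p)^{1/p} : φᵀ(μ-ν) = 1 }`
times
`inf { (Σ_e w_e^{1-q} |J_e|^q)^{1/q} : BJ = μ - ν }` equals `1`. -/
theorem p_conductance_beckmann_gauge_duality
    (n N : ℕ) (s t : Fin N → Fin n) (w : Fin N → ℝ)
    (hw : ∀ e, 0 < w e) (hst : ∀ e, s e ≠ t e)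
    (hconn : (SimpleGraph.fromRel fun i j => ∃ e, s e = i ∧ t e = j).Connected)
    (μ ν : Fin n → ℝ)
    (hμ : (∀ i, 0 ≤ μ i) ∧ ∑ i, μ i = 1)
    (hν : (∀ i, 0 ≤ ν i) ∧ ∑ i, ν i = 1)
    (hμν : μ ≠ ν)
    (p q : ℝ) (hp : 1 < p) (hpq : 1 / p + 1 / q = 1) :
    sInf {c : ℝ | ∃ φ : Fin n → ℝ, φ ⬝ᵥ (μ - ν) = 1 ∧
        c = (∑ e, w e * |φ (s e) - φ (t e)| ^ p) ^ (1 / p)} *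
    sInf {c : ℝ | ∃ J : Fin N → ℝ,
        (∀ v, (∑ e, J e * ((if s e = v then (1:ℝ) else 0) - (if t e = v then (1:ℝ) else 0)))
          = μ v - ν v) ∧
        c = (∑ e, w e ^ (1 - q) * |J e| ^ q) ^ (1 / q)} = 1 :=
  p_conductance_beckmann_gauge_duality_general n N s t w hw hconn μ ν hμ hν hμν p q hp hpq
end

section
/- Let G be a finite connected weighted undirected graph with Laplacian L, and let μ, ν ∈ P(V) with μ ≠ ν. Then C_2(μ,ν)² = 1 / ( (μ−ν)ᵀ L† (μ−ν) ); that is, ( inf { Σ_{{i,j}∈E} w_{ij}(φ_i − φ_j)² : φ ∈ ℝ^n, φᵀ(μ−ν) = 1 } ) · ( (μ−ν)ᵀ L† (μ−ν) ) = 1. -/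
/-!
Write `x = μ - ν`, `y = L† x` and `R = xᵀ y`. On a connected graph the kernel of `L` consists of
the constant vectors, to which `x` is orthogonal; so `x` lies in the range of `L`, and the Penrose
equations `L L† L = L`, `(L L†)ᵀ = L L†` give `L y = x`. For `φᵀ x = 1`, expanding
`0 ≤ (R φ - y)ᵀ L (R φ - y)` yields `R ≤ R² φᵀ L φ`, and `φ = y / R` attains `φᵀ L φ = 1 / R`.
Finally `R > 0`, since `R = yᵀ L y = 0` would force `x = L y = 0` for the semidefinite `L`.
-/

open Matrix

theorem Fintype.two_nsmul_sum_sum_ite_lt {ι M : Type*} [Fintype ι] [LinearOrder ι]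
    [AddCommMonoid M] {f : ι → ι → M} (hf : ∀ i j, f i j = f j i) (hdiag : ∀ i, f i i = 0) :
    2 • ∑ i, ∑ j, (if i < j then f i j else 0) = ∑ i, ∑ j, f i j := by
  have hsplit : ∀ i j, f i j = (if i < j then f i j else 0) + (if j < i then f j i else 0) := by
    intro i j
    rcases lt_trichotomy i j with h | rfl | h
    · simp [h, h.not_gt]
    · simp [hdiag]
    · simp [h, h.not_gt, hf i j]
  calc 2 • ∑ i, ∑ j, (if i < j then f i j else 0)
      = ∑ i, ∑ j, (if i < j then f i j else 0) + ∑ i, ∑ j, (if j < i then f j i else 0) := by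
        rw [two_nsmul, Finset.sum_comm (γ := ι)]
    _ = ∑ i, ∑ j, f i j := by
        simp only [← Finset.sum_add_distrib]
        exact Finset.sum_congr rfl fun i _ => Finset.sum_congr rfl fun j _ => (hsplit i j).symm

namespace Matrix

variable {ι : Type*} [Fintype ι]

theorem dotProduct_eq_zero_of_forall_eq_of_sum_eq_zero {z x : ι → ℝ} (hz : ∀ i j, z i = z j)
    (hx : ∑ i, x i = 0) : z ⬝ᵥ x = 0 := by
  rcases isEmpty_or_nonempty ι with _ | ⟨⟨i₀⟩⟩
  · simp [dotProduct]
  · calc z ⬝ᵥ x = ∑ i, z i₀ * x i := Finset.sum_congr rfl fun i _ => by rw [hz i i₀]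
      _ = 0 := by rw [← Finset.mul_sum, hx, mul_zero]

section QuadraticForm

variable {A : Matrix ι ι ℝ}

theorem IsSymm.dotProduct_mulVec_comm (hA : A.IsSymm) (u v : ι → ℝ) :
    u ⬝ᵥ A *ᵥ v = v ⬝ᵥ A *ᵥ u := by
  rw [dotProduct_mulVec, ← mulVec_transpose, hA.eq, dotProduct_comm]

theorem IsSymm.dotProduct_mulVec_eq_zero_of_mulVec_eq_zero (hA : A.IsSymm) {z : ι → ℝ}
    (hz : A *ᵥ z = 0) (w : ι → ℝ) : z ⬝ᵥ A *ᵥ w = 0 := by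
  rw [hA.dotProduct_mulVec_comm, hz, dotProduct_zero]

theorem IsSymm.mulVec_mulVec_eq_self_of_penrose (hA : A.IsSymm) {B : Matrix ι ι ℝ}
    (h₁ : A * B * A = A) (h₃ : (A * B)ᵀ = A * B) {x : ι → ℝ}
    (hx : ∀ z, A *ᵥ z = 0 → z ⬝ᵥ x = 0) : A *ᵥ (B *ᵥ x) = x := by
  have hAP : A * A * B = A := by
    rw [Matrix.mul_assoc]
    simpa only [transpose_mul, h₃, hA.eq] using congrArg Matrix.transpose h₁
  set r := x - A *ᵥ (B *ᵥ x) with hr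
  have hAr : A *ᵥ r = 0 := by
    rw [hr, mulVec_sub, mulVec_mulVec, mulVec_mulVec, hAP, sub_self]
  have hrr : r ⬝ᵥ r = 0 := by
    conv_lhs => rw [hr]
    rw [dotProduct_sub, hx r hAr, hA.dotProduct_mulVec_eq_zero_of_mulVec_eq_zero hAr, sub_self]
  exact (sub_eq_zero.1 (dotProduct_self_eq_zero.1 hrr)).symm

variable (hA : A.PosSemidef) {x y : ι → ℝ} (hy : A *ᵥ y = x)
include hA hy

theorem PosSemidef.inv_dotProduct_le_dotProduct_mulVec {φ : ι → ℝ} (hφ : φ ⬝ᵥ x = 1) :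
    (x ⬝ᵥ y)⁻¹ ≤ φ ⬝ᵥ A *ᵥ φ := by
  set R := x ⬝ᵥ y
  have hsymm : A.IsSymm := isHermitian_iff_isSymm.1 hA.isHermitian
  have hφy : φ ⬝ᵥ A *ᵥ y = 1 := by rw [hy, hφ]
  have hyy : y ⬝ᵥ A *ᵥ y = R := by rw [hy, dotProduct_comm]
  rcases (hA.dotProduct_mulVec_nonneg y).lt_or_eq with hR | hR
  · have hsq := hA.dotProduct_mulVec_nonneg (R • φ - y)
    simp only [star_trivial, mulVec_sub, mulVec_smul, dotProduct_sub, sub_dotProduct,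
      dotProduct_smul, smul_dotProduct, smul_eq_mul, hsymm.dotProduct_mulVec_comm y φ,
      hφy, hyy] at hsq hR
    rw [inv_le_iff_one_le_mul₀' hR]
    nlinarith
  · simp only [star_trivial, hyy] at hR
    simpa [← hR] using hA.dotProduct_mulVec_nonneg φ

theorem PosSemidef.dotProduct_pos_of_mulVec_eq (hx : x ≠ 0) : 0 < x ⬝ᵥ y := by
  have hyy : y ⬝ᵥ A *ᵥ y = x ⬝ᵥ y := by rw [hy, dotProduct_comm]
  have hnonneg := hA.dotProduct_mulVec_nonneg y
  rw [star_trivial, hyy] at hnonneg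
  refine hnonneg.lt_of_ne fun h => hx ?_
  rw [← hy, ← hA.dotProduct_mulVec_zero_iff, star_trivial, hyy, h]

theorem PosSemidef.sInf_dotProduct_mulVec_mul_dotProduct (hx : x ≠ 0) :
    sInf {c : ℝ | ∃ φ : ι → ℝ, φ ⬝ᵥ x = 1 ∧ c = φ ⬝ᵥ A *ᵥ φ} * (x ⬝ᵥ y) = 1 := by
  have hR := hA.dotProduct_pos_of_mulVec_eq hy hx
  have hleast : IsLeast {c : ℝ | ∃ φ : ι → ℝ, φ ⬝ᵥ x = 1 ∧ c = φ ⬝ᵥ A *ᵥ φ} (x ⬝ᵥ y)⁻¹ := by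
    refine ⟨⟨(x ⬝ᵥ y)⁻¹ • y, ?_, ?_⟩, ?_⟩
    · rw [smul_dotProduct, dotProduct_comm y x, smul_eq_mul, inv_mul_cancel₀ hR.ne']
    · rw [mulVec_smul, hy, dotProduct_smul, smul_dotProduct, dotProduct_comm y x, smul_eq_mul,
        smul_eq_mul]
      field_simp
    · rintro c ⟨φ, hφ, rfl⟩
      exact hA.inv_dotProduct_le_dotProduct_mulVec hy hφ
  rw [hleast.csInf_eq, inv_mul_cancel₀ hR.ne']

end QuadraticForm

section Laplacian

variable [DecidableEq ι]

def weightedLaplacian (W : Matrix ι ι ℝ) : Matrix ι ι ℝ :=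
  diagonal (fun i => ∑ j, W i j) - W

variable {W : Matrix ι ι ℝ}

theorem dotProduct_weightedLaplacian_mulVec_eq_sum (φ : ι → ℝ) :
    φ ⬝ᵥ weightedLaplacian W *ᵥ φ = ∑ i, ∑ j, W i j * (φ i * (φ i - φ j)) := by
  rw [weightedLaplacian, sub_mulVec, dotProduct_sub]
  simp only [dotProduct, mulVec_diagonal]
  simp only [mulVec, dotProduct, Finset.mul_sum, Finset.sum_mul, ← Finset.sum_sub_distrib]
  refine Finset.sum_congr rfl fun i _ => Finset.sum_congr rfl fun j _ => by ring

theorem two_mul_dotProduct_weightedLaplacian_mulVec (hW : W.IsSymm) (φ : ι → ℝ) :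
    2 * (φ ⬝ᵥ weightedLaplacian W *ᵥ φ) = ∑ i, ∑ j, W i j * (φ i - φ j) ^ 2 := by
  have hswap : ∑ i, ∑ j, W i j * (φ j * (φ j - φ i)) = ∑ i, ∑ j, W i j * (φ i * (φ i - φ j)) := by
    rw [Finset.sum_comm]
    simp only [hW.apply]
  rw [dotProduct_weightedLaplacian_mulVec_eq_sum, two_mul]
  nth_rewrite 2 [← hswap]
  simp only [← Finset.sum_add_distrib]
  exact Finset.sum_congr rfl fun i _ => Finset.sum_congr rfl fun j _ => by ring

theorem dotProduct_weightedLaplacian_mulVec [LinearOrder ι] (hW : W.IsSymm) (φ : ι → ℝ) :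
    φ ⬝ᵥ weightedLaplacian W *ᵥ φ =
      ∑ i, ∑ j, if i < j then W i j * (φ i - φ j) ^ 2 else 0 := by
  have h := Fintype.two_nsmul_sum_sum_ite_lt (f := fun i j => W i j * (φ i - φ j) ^ 2)
    (fun i j => by rw [hW.apply]; ring) (fun i => by simp)
  rw [← two_mul_dotProduct_weightedLaplacian_mulVec hW, two_nsmul, ← two_mul] at h
  exact (mul_left_cancel₀ two_ne_zero h).symm

theorem isSymm_weightedLaplacian (hW : W.IsSymm) : (weightedLaplacian W).IsSymm := by
  rw [IsSymm, weightedLaplacian, transpose_sub, diagonal_transpose, hW.eq]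

variable (hW : W.IsSymm) (hW₀ : ∀ i j, 0 ≤ W i j)
include hW hW₀

theorem posSemidef_weightedLaplacian : (weightedLaplacian W).PosSemidef := by
  refine .of_dotProduct_mulVec_nonneg ?_ fun φ => ?_
  · exact isHermitian_iff_isSymm.2 (isSymm_weightedLaplacian hW)
  · have h := two_mul_dotProduct_weightedLaplacian_mulVec hW φ
    have : 0 ≤ ∑ i, ∑ j, W i j * (φ i - φ j) ^ 2 :=
      Finset.sum_nonneg fun i _ => Finset.sum_nonneg fun j _ => mul_nonneg (hW₀ i j) (sq_nonneg _)
    rw [star_trivial]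
    linarith

theorem eq_of_weightedLaplacian_mulVec_eq_zero {z : ι → ℝ} (hz : weightedLaplacian W *ᵥ z = 0)
    {i j : ι} (hij : W i j ≠ 0) : z i = z j := by
  have hnonneg : ∀ i j, 0 ≤ W i j * (z i - z j) ^ 2 := fun i j =>
    mul_nonneg (hW₀ i j) (sq_nonneg _)
  have hsum := two_mul_dotProduct_weightedLaplacian_mulVec hW z
  rw [hz, dotProduct_zero, mul_zero, eq_comm,
    Fintype.sum_eq_zero_iff_of_nonneg fun i => Finset.sum_nonneg fun j _ => hnonneg i j] at hsum
  have hrow := congrFun hsum i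
  rw [Pi.zero_apply, Fintype.sum_eq_zero_iff_of_nonneg (hnonneg i)] at hrow
  obtain h | h := mul_eq_zero.1 (congrFun hrow j)
  · exact absurd h hij
  · exact sub_eq_zero.1 (pow_eq_zero_iff two_ne_zero |>.1 h)

theorem eq_of_connected_of_weightedLaplacian_mulVec_eq_zero
    (hconn : (SimpleGraph.fromRel fun i j => W i j ≠ 0).Connected) {z : ι → ℝ}
    (hz : weightedLaplacian W *ᵥ z = 0) (i j : ι) : z i = z j := by
  obtain ⟨p⟩ := hconn.preconnected i j
  induction p with
  | nil => rfl
  | cons hadj _ ih =>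
    refine Eq.trans ?_ ih
    rcases (SimpleGraph.fromRel_adj _ _ _).1 hadj |>.2 with h | h
    · exact eq_of_weightedLaplacian_mulVec_eq_zero hW hW₀ hz h
    · exact (eq_of_weightedLaplacian_mulVec_eq_zero hW hW₀ hz h).symm

end Laplacian

end Matrix

theorem two_conductance_sq_eq_inv_effective_resistance_general
    (n : ℕ) (W : Matrix (Fin n) (Fin n) ℝ)
    (hWsymm : W.IsSymm) (hWnonneg : ∀ i j, 0 ≤ W i j)
    (hconn : (SimpleGraph.fromRel fun i j => W i j ≠ 0).Connected)
    (L : Matrix (Fin n) (Fin n) ℝ)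
    (hL : L = Matrix.diagonal (fun i => ∑ j, W i j) - W)
    (Ldag : Matrix (Fin n) (Fin n) ℝ)
    (hpen1 : L * Ldag * L = L)
    (hpen3 : (L * Ldag)ᵀ = L * Ldag)
    (μ ν : Fin n → ℝ)
    (hμ : (∀ i, 0 ≤ μ i) ∧ ∑ i, μ i = 1)
    (hν : (∀ i, 0 ≤ ν i) ∧ ∑ i, ν i = 1)
    (hμν : μ ≠ ν) :
    sInf {c : ℝ | ∃ φ : Fin n → ℝ, φ ⬝ᵥ (μ - ν) = 1 ∧
        c = ∑ i, ∑ j, if i < j then W i j * (φ i - φ j) ^ 2 else 0} *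
      ((μ - ν) ⬝ᵥ Ldag.mulVec (μ - ν)) = 1 := by
  replace hL : L = weightedLaplacian W := hL
  subst hL
  have hsum : ∑ i, (μ - ν) i = 0 := by
    simp only [Pi.sub_apply, Finset.sum_sub_distrib, hμ.2, hν.2, sub_self]
  have hLy : weightedLaplacian W *ᵥ (Ldag *ᵥ (μ - ν)) = μ - ν :=
    (isSymm_weightedLaplacian hWsymm).mulVec_mulVec_eq_self_of_penrose hpen1 hpen3 fun _ hz =>
      dotProduct_eq_zero_of_forall_eq_of_sum_eq_zero
        (eq_of_connected_of_weightedLaplacian_mulVec_eq_zero hWsymm hWnonneg hconn hz) hsum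
  simp_rw [← dotProduct_weightedLaplacian_mulVec hWsymm]
  exact (posSemidef_weightedLaplacian hWsymm hWnonneg).sInf_dotProduct_mulVec_mul_dotProduct hLy
    (sub_ne_zero.2 hμν)

/-- **2-conductance and effective resistance.**
Let `W` be the symmetric weighted adjacency matrix (nonnegative entries, zero diagonal)
of a finite connected weighted undirected graph on vertices `Fin n` (edges are the pairs
`{i,j}` with `W i j ≠ 0`), let `L = D - W` be its Laplacian, and let `Ldag` be the
Moore–Penrose pseudoinverse of `L` (characterized by the four Penrose equations).
For probability measures `μ ≠ ν` on the vertices,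
`C₂(μ,ν)² = 1 / ((μ-ν)ᵀ L† (μ-ν))`, i.e.
`inf { Σ_{{i,j}∈E} w_{ij} (φ_i - φ_j)² : φᵀ(μ-ν) = 1 } · ((μ-ν)ᵀ L† (μ-ν)) = 1`. -/
theorem two_conductance_sq_eq_inv_effective_resistance
    (n : ℕ) (W : Matrix (Fin n) (Fin n) ℝ)
    (hWsymm : W.IsSymm) (hWnonneg : ∀ i j, 0 ≤ W i j) (hWdiag : ∀ i, W i i = 0)
    (hconn : (SimpleGraph.fromRel fun i j => W i j ≠ 0).Connected)
    (L : Matrix (Fin n) (Fin n) ℝ)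
    (hL : L = Matrix.diagonal (fun i => ∑ j, W i j) - W)
    (Ldag : Matrix (Fin n) (Fin n) ℝ)
    (hpen1 : L * Ldag * L = L) (hpen2 : Ldag * L * Ldag = Ldag)
    (hpen3 : (L * Ldag)ᵀ = L * Ldag) (hpen4 : (Ldag * L)ᵀ = Ldag * L)
    (μ ν : Fin n → ℝ)
    (hμ : (∀ i, 0 ≤ μ i) ∧ ∑ i, μ i = 1)
    (hν : (∀ i, 0 ≤ ν i) ∧ ∑ i, ν i = 1)
    (hμν : μ ≠ ν) :
    sInf {c : ℝ | ∃ φ : Fin n → ℝ, φ ⬝ᵥ (μ - ν) = 1 ∧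
        c = ∑ i, ∑ j, if i < j then W i j * (φ i - φ j) ^ 2 else 0} *
      ((μ - ν) ⬝ᵥ Ldag.mulVec (μ - ν)) = 1 :=
  two_conductance_sq_eq_inv_effective_resistance_general n W hWsymm hWnonneg hconn L hL Ldag hpen1
    hpen3 μ ν hμ hν hμν
end

section
/- Let L ∈ ℝ^{n×n} be a real symmetric positive semidefinite matrix and let t ≥ 0. Then the operator norm bound ‖ L† (I − e^{−tL}) x ‖₂ ≤ t ‖x‖₂ holds for every x ∈ ℝ^n, where L† is the Moore–Penrose pseudoinverse of L and e^{−tL} is the matrix exponential of −tL. -/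
open Matrix

/-!
Write `1 - e^{-tL} = L f(L)` with `f(λ) = (1 - e^{-tλ}) / λ`, an identity of functions that also
holds at `λ = 0`, where Lean's division gives `f 0 = 0`. Then `L† (1 - e^{-tL}) = (L† L) f(L)`.
Since `L L† L = L` and `L† L` is symmetric, `L† L` is an orthogonal projection, of operator norm
at most `1`; and `0 ≤ f(λ) ≤ t` on the nonnegative spectrum of `L`, so `‖f(L)‖ ≤ t`.
-/

open scoped Matrix.Norms.L2Operator

lemma isStarProjection_mul_of_mul_mul_eq {R : Type*} [Semigroup R] [Star R] {l a : R}
    (h : l * a * l = l) (ha : IsSelfAdjoint (a * l)) : IsStarProjection (a * l) :=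
  ⟨by rw [IsIdempotentElem, mul_assoc, ← mul_assoc l, h], ha⟩

lemma abs_one_sub_exp_neg_mul_div_le {t x : ℝ} (ht : 0 ≤ t) (hx : 0 ≤ x) :
    |(1 - Real.exp (-(t * x))) / x| ≤ t := by
  rcases hx.eq_or_lt with rfl | hx
  · simpa using ht
  have hle : 1 - Real.exp (-(t * x)) ≤ t * x := by linarith [Real.add_one_le_exp (-(t * x))]
  have hnonneg : 0 ≤ 1 - Real.exp (-(t * x)) := by
    linarith [Real.exp_le_one_iff.mpr (neg_nonpos.mpr (mul_nonneg ht hx.le))]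
  rw [abs_of_nonneg (div_nonneg hnonneg hx.le), div_le_iff₀ hx]
  exact hle

namespace Matrix

variable {n : Type*} [Fintype n] [DecidableEq n]

theorem IsHermitian.l2_opNorm_cfc_le {𝕜 : Type*} [RCLike 𝕜] {A : Matrix n n 𝕜}
    (hA : A.IsHermitian) (f : ℝ → ℝ) {c : ℝ} (hc : 0 ≤ c)
    (hf : ∀ x ∈ spectrum ℝ A, |f x| ≤ c) : ‖cfc f A‖ ≤ c := by
  have hU := hA.eigenvectorUnitary.2
  rw [hA.cfc_eq, IsHermitian.cfc, Unitary.conjStarAlgAut_apply,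
    CStarRing.norm_mul_mem_unitary _ (Unitary.star_mem hU), CStarRing.norm_mem_unitary_mul _ hU,
    l2_opNorm_diagonal]
  refine (pi_norm_le_iff_of_nonneg hc).mpr fun i => ?_
  simpa using hf _ (hA.spectrum_real_eq_range_eigenvalues ▸ Set.mem_range_self i)

theorem exp_neg_smul_eq_cfc {L : Matrix n n ℝ} (hL : IsSelfAdjoint L) (t : ℝ) :
    NormedSpace.exp (-(t • L)) = cfc (fun x => Real.exp (-(t * x))) L := by
  rw [← neg_smul, ← CFC.real_exp_eq_normedSpace_exp, ← cfc_comp_const_mul (-t) Real.exp L]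
  simp only [neg_mul]

theorem one_sub_exp_neg_smul_eq_mul_cfc {L : Matrix n n ℝ} (hL : IsSelfAdjoint L) (t : ℝ) :
    1 - NormedSpace.exp (-(t • L)) = L * cfc (fun x => (1 - Real.exp (-(t * x))) / x) L := by
  have hcont (f : ℝ → ℝ) : ContinuousOn f (spectrum ℝ L) := L.finite_real_spectrum.continuousOn f
  have hmul := cfc_mul (fun x => x) (fun x => (1 - Real.exp (-(t * x))) / x) L (hcont _) (hcont _)
  rw [cfc_id' ℝ L] at hmul
  rw [exp_neg_smul_eq_cfc hL, ← hmul, ← cfc_one ℝ L, ← cfc_sub _ _ L (hcont _) (hcont _)]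
  congr 1
  funext x
  exact (mul_div_cancel_of_imp' (by rintro rfl; simp)).symm

theorem sqrt_sum_sq_mulVec_le {m : Type*} [Fintype m] {M : Matrix m n ℝ} {c : ℝ} (hM : ‖M‖ ≤ c)
    (x : n → ℝ) : √(∑ i, (M *ᵥ x) i ^ 2) ≤ c * √(∑ i, x i ^ 2) := by
  have h := M.l2_opNorm_mulVec (WithLp.toLp 2 x)
  simp only [EuclideanSpace.norm_eq, Real.norm_eq_abs, sq_abs] at h
  exact h.trans (mul_le_mul_of_nonneg_right hM (Real.sqrt_nonneg _))

end Matrix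

theorem pinv_one_sub_heat_kernel_bound_general
    (n : ℕ) (L : Matrix (Fin n) (Fin n) ℝ) (hL : L.PosSemidef)
    (Ldag : Matrix (Fin n) (Fin n) ℝ)
    (hpen1 : L * Ldag * L = L)
    (hpen4 : (Ldag * L)ᵀ = Ldag * L)
    (t : ℝ) (ht : 0 ≤ t) (x : Fin n → ℝ) :
    Real.sqrt (∑ i, ((Ldag * (1 - NormedSpace.exp (-(t • L)))).mulVec x i) ^ 2)
      ≤ t * Real.sqrt (∑ i, (x i) ^ 2) := by
  set f : ℝ → ℝ := fun μ => (1 - Real.exp (-(t * μ))) / μ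
  have hproj : IsStarProjection (Ldag * L) :=
    isStarProjection_mul_of_mul_mul_eq hpen1 <| by
      rwa [IsSelfAdjoint, star_eq_conjTranspose, conjTranspose_eq_transpose_of_trivial]
  have hspec := (posSemidef_iff_isHermitian_and_spectrum_nonneg.mp hL).2
  have hf : ‖cfc f L‖ ≤ t :=
    hL.1.l2_opNorm_cfc_le f ht fun μ hμ => abs_one_sub_exp_neg_mul_div_le ht (hspec hμ)
  refine sqrt_sum_sq_mulVec_le ?_ x
  calc ‖Ldag * (1 - NormedSpace.exp (-(t • L)))‖
      = ‖Ldag * L * cfc f L‖ := by rw [one_sub_exp_neg_smul_eq_mul_cfc hL.1, mul_assoc]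
    _ ≤ ‖Ldag * L‖ * ‖cfc f L‖ := norm_mul_le _ _
    _ ≤ 1 * t := mul_le_mul hproj.norm_le hf (norm_nonneg _) zero_le_one
    _ = t := one_mul t

/-- For a real symmetric positive semidefinite matrix `L`, its
Moore–Penrose pseudoinverse `L†` (characterized by the four Penrose equations),
and `t ≥ 0`, we have `‖L† (I - e^{-tL}) x‖₂ ≤ t ‖x‖₂` for every `x ∈ ℝⁿ`,
where `‖v‖₂ = √(Σ_i v_i²)` is the Euclidean norm. -/
theorem pinv_one_sub_heat_kernel_bound
    (n : ℕ) (L : Matrix (Fin n) (Fin n) ℝ) (hL : L.PosSemidef)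
    (Ldag : Matrix (Fin n) (Fin n) ℝ)
    (hpen1 : L * Ldag * L = L) (hpen2 : Ldag * L * Ldag = Ldag)
    (hpen3 : (L * Ldag)ᵀ = L * Ldag) (hpen4 : (Ldag * L)ᵀ = Ldag * L)
    (t : ℝ) (ht : 0 ≤ t) (x : Fin n → ℝ) :
    Real.sqrt (∑ i, ((Ldag * (1 - NormedSpace.exp (-(t • L)))).mulVec x i) ^ 2)
      ≤ t * Real.sqrt (∑ i, (x i) ^ 2) :=
  pinv_one_sub_heat_kernel_bound_general n L hL Ldag hpen1 hpen4 t ht x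
end
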